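/- Let L be a Z_p-Lie algebra, free of rank 3 as a Z_p-module with basis {x_1, x_2, x_3}, such that (x_1,x_2) = α·x_2, (x_2,x_3) = β_2·x_2 + β_3·x_3, and (x_1,x_3) = γ_1·x_1 + γ_3·x_3 for some α, β_2, β_3, γ_1, γ_3 ∈ pZ_p. Then the Jacobi identity forces β_3·γ_1 = 0. -/

import Mathlib

section ThreeDimensional

variable {R L : Type*} [CommRing R] [LieRing L] [LieAlgebra R L] (x : Fin 3 → L)
  {α β₂ β₃ γ₁ γ₃ : R}

theorem lie_jacobi_expand_of_brackets (h12 : ⁅x 0, x 1⁆ = α • x 1)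
    (h23 : ⁅x 1, x 2⁆ = β₂ • x 1 + β₃ • x 2) (h13 : ⁅x 0, x 2⁆ = γ₁ • x 0 + γ₃ • x 2) :
    ⁅x 0, ⁅x 1, x 2⁆⁆ + ⁅x 1, ⁅x 2, x 0⁆⁆ + ⁅x 2, ⁅x 0, x 1⁆⁆ =
      (β₃ * γ₁) • x 0 + (γ₁ * α - γ₃ * β₂) • x 1 + (-(α * β₃)) • x 2 := by
  have h21 : ⁅x 1, x 0⁆ = -(α • x 1) := by rw [← lie_skew, h12]
  have h32 : ⁅x 2, x 1⁆ = -(β₂ • x 1 + β₃ • x 2) := by rw [← lie_skew, h23]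
  have h31 : ⁅x 2, x 0⁆ = -(γ₁ • x 0 + γ₃ • x 2) := by rw [← lie_skew, h13]
  rw [h23, h31, h12]
  simp only [lie_add, lie_smul, lie_neg, h12, h23, h13, h21, h32]
  module

theorem structure_constants_eq_of_linearIndependent (hx : LinearIndependent R x)
    (h12 : ⁅x 0, x 1⁆ = α • x 1) (h23 : ⁅x 1, x 2⁆ = β₂ • x 1 + β₃ • x 2)
    (h13 : ⁅x 0, x 2⁆ = γ₁ • x 0 + γ₃ • x 2) :
    β₃ * γ₁ = 0 ∧ γ₁ * α = γ₃ * β₂ ∧ α * β₃ = 0 := by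
  have hsum : ∑ i, ![β₃ * γ₁, γ₁ * α - γ₃ * β₂, -(α * β₃)] i • x i = 0 := by
    simp only [Fin.sum_univ_three, Matrix.cons_val_zero, Matrix.cons_val_one,
      Matrix.cons_val_two, Matrix.head_cons, Matrix.tail_cons]
    rw [← lie_jacobi_expand_of_brackets x h12 h23 h13]
    exact lie_jacobi _ _ _
  have hcoeff := Fintype.linearIndependent_iff.mp hx _ hsum
  exact ⟨hcoeff 0, sub_eq_zero.mp (hcoeff 1), neg_eq_zero.mp (hcoeff 2)⟩

end ThreeDimensional

theorem stmt_4_general (p : ℕ) [Fact p.Prime] (L : Type) [LieRing L] [LieAlgebra ℤ_[p] L]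
    (x : Module.Basis (Fin 3) ℤ_[p] L) (α β₂ β₃ γ₁ γ₃ : ℤ_[p])
    (h12 : ⁅x 0, x 1⁆ = α • x 1)
    (h23 : ⁅x 1, x 2⁆ = β₂ • x 1 + β₃ • x 2)
    (h13 : ⁅x 0, x 2⁆ = γ₁ • x 0 + γ₃ • x 2) :
    β₃ * γ₁ = 0 :=
  (structure_constants_eq_of_linearIndependent x x.linearIndependent h12 h23 h13).1

/-- Let `L` be a `ℤ_p`-Lie algebra, free of rank 3 as a `ℤ_p`-module with basis
`x 0, x 1, x 2`, with `⁅x 0, x 1⁆ = α • x 1`, `⁅x 1, x 2⁆ = β₂ • x 1 + β₃ • x 2` and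
`⁅x 0, x 2⁆ = γ₁ • x 0 + γ₃ • x 2`, all coefficients lying in `pℤ_p`.  Then the Jacobi
identity forces `β₃ * γ₁ = 0`. -/
theorem stmt_4 (p : ℕ) [Fact p.Prime] (L : Type) [LieRing L] [LieAlgebra ℤ_[p] L]
    (x : Module.Basis (Fin 3) ℤ_[p] L) (α β₂ β₃ γ₁ γ₃ : ℤ_[p])
    (hα : (p : ℤ_[p]) ∣ α) (hβ₂ : (p : ℤ_[p]) ∣ β₂) (hβ₃ : (p : ℤ_[p]) ∣ β₃)
    (hγ₁ : (p : ℤ_[p]) ∣ γ₁) (hγ₃ : (p : ℤ_[p]) ∣ γ₃)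
    (h12 : ⁅x 0, x 1⁆ = α • x 1)
    (h23 : ⁅x 1, x 2⁆ = β₂ • x 1 + β₃ • x 2)
    (h13 : ⁅x 0, x 2⁆ = γ₁ • x 0 + γ₃ • x 2) :
    β₃ * γ₁ = 0 :=
  stmt_4_general p L x α β₂ β₃ γ₁ γ₃ h12 h23 h13
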